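/- Let H be a complex Hilbert space, A : H → H a bounded self-adjoint operator, and c : H → H a bounded operator with c* = -c and c ∘ c = -I such that A ∘ c = -c ∘ A. Let l ∈ ℝ, 0 < ε < ∞, and f : (0,ε) → (0,∞) continuous with ∫₀^ε f(x) dx = +∞. If φ : (0,ε) → H is continuously differentiable, satisfies φ'(x) + A(φ(x)) = -l·f(x)·c(φ(x)) for all x ∈ (0,ε), and ∫₀^ε ‖φ(x)‖² f(x) dx < ∞, then φ(x) → 0 in H as x → 0⁺. -/

import Mathlib

/-!
Skew-adjointness of `c` removes the unbounded coefficient `l f` from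
`(‖φ‖²)' = 2 Re ⟪φ, φ'⟫`, leaving `|(‖φ‖²)'| ≤ 2‖A‖ ‖φ‖²`. By Gronwall on the bounded interval
`(0, ε)`, the values of `‖φ‖²` at any two points agree up to the factor `exp (2‖A‖ε)`. So if
`φ (y) ≠ 0` for one `y`, then `‖φ‖²` is bounded below by some `δ > 0` on all of `(0, ε)` and
`∫ ‖φ‖² f ≥ δ ∫ f = ∞`. Hence `φ` vanishes identically on `(0, ε)`.
-/

open MeasureTheory Set Filter

section InnerApplySelf

variable {𝕜 E : Type*} [RCLike 𝕜] [NormedAddCommGroup E] [InnerProductSpace 𝕜 E]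

theorem abs_re_inner_self_apply_le (A : E →L[𝕜] E) (v : E) :
    |RCLike.re (inner 𝕜 v (A v))| ≤ ‖A‖ * ‖v‖ ^ 2 := by
  grw [RCLike.abs_re_le_norm, norm_inner_le_norm, A.le_opNorm]
  exact le_of_eq (by ring)

variable [CompleteSpace E]

theorem ContinuousLinearMap.re_inner_self_apply_eq_zero_of_adjoint_eq_neg {c : E →L[𝕜] E}
    (hc : c.adjoint = -c) (v : E) : RCLike.re (inner 𝕜 v (c v)) = 0 := by
  have h : inner 𝕜 v (c v) = -(starRingEnd 𝕜) (inner 𝕜 v (c v)) := by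
    rw [inner_conj_symm, ← ContinuousLinearMap.adjoint_inner_right, hc,
      neg_apply, inner_neg_right, neg_neg]
  have hre := congrArg RCLike.re h
  rw [map_neg, RCLike.conj_re] at hre
  linarith

end InnerApplySelf

theorem hasDerivAt_norm_sq_of_adjoint_eq_neg {H : Type*} [NormedAddCommGroup H]
    [InnerProductSpace ℂ H] [CompleteSpace H] {A c : H →L[ℂ] H} (hc : c.adjoint = -c)
    {φ : ℝ → H} {r x : ℝ} (hφ : HasDerivAt φ (-(A (φ x)) - (r : ℂ) • c (φ x)) x) :
    HasDerivAt (‖φ ·‖ ^ 2) (-2 * RCLike.re (inner ℂ (φ x) (A (φ x)))) x := by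
  let _ := InnerProductSpace.complexToReal (G := H)
  convert hφ.norm_sq using 1
  have hskew := c.re_inner_self_apply_eq_zero_of_adjoint_eq_neg hc (φ x)
  simp [real_inner_eq_re_inner, inner_sub_right, inner_smul_right, hskew]

section Gronwall

variable {g g' : ℝ → ℝ} {K : ℝ} {s : Set ℝ}

theorem monotoneOn_mul_exp_of_neg_mul_le_deriv (hs : Convex ℝ s) (hs' : IsOpen s)
    (hg : ∀ x ∈ s, HasDerivAt g (g' x) x) (h : ∀ x ∈ s, -(K * g x) ≤ g' x) :
    MonotoneOn (fun x => g x * Real.exp (K * x)) s := by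
  have hd : ∀ x ∈ s, HasDerivAt (fun x => g x * Real.exp (K * x))
      (g' x * Real.exp (K * x) + g x * (Real.exp (K * x) * K)) x := fun x hx =>
    (hg x hx).mul (by simpa using ((hasDerivAt_id x).const_mul K).exp)
  refine monotoneOn_of_hasDerivWithinAt_nonneg hs
    (fun x hx => (hd x hx).continuousAt.continuousWithinAt)
    (fun x hx => (hd x (interior_subset hx)).hasDerivWithinAt) fun x hx => ?_
  rw [hs'.interior_eq] at hx
  nlinarith [h x hx, Real.exp_pos (K * x)]

theorem antitoneOn_mul_exp_neg_of_deriv_le_mul (hs : Convex ℝ s) (hs' : IsOpen s)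
    (hg : ∀ x ∈ s, HasDerivAt g (g' x) x) (h : ∀ x ∈ s, g' x ≤ K * g x) :
    AntitoneOn (fun x => g x * Real.exp (-K * x)) s := by
  have hmono := monotoneOn_mul_exp_of_neg_mul_le_deriv (g := -g) (g' := -g') (K := -K) hs hs'
    (fun x hx => (hg x hx).neg) (fun x hx => by simpa using h x hx)
  intro x hx y hy hxy
  simpa using hmono hx hy hxy

theorem le_mul_exp_abs_sub_of_abs_deriv_le (hs : Convex ℝ s) (hs' : IsOpen s)
    (hg : ∀ x ∈ s, HasDerivAt g (g' x) x) (h : ∀ x ∈ s, |g' x| ≤ K * g x) {x y : ℝ}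
    (hx : x ∈ s) (hy : y ∈ s) : g y ≤ g x * Real.exp (K * |y - x|) := by
  rcases le_total x y with hxy | hyx
  · have hanti := antitoneOn_mul_exp_neg_of_deriv_le_mul hs hs' hg
      (fun z hz => (abs_le.1 (h z hz)).2) hx hy hxy
    calc g y = g y * Real.exp (-K * y) * Real.exp (K * y) := by
          rw [mul_assoc, ← Real.exp_add]; simp
      _ ≤ g x * Real.exp (-K * x) * Real.exp (K * y) := by gcongr
      _ = g x * Real.exp (K * |y - x|) := by
          rw [abs_of_nonneg (sub_nonneg.2 hxy), mul_assoc, ← Real.exp_add]; ring_nf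
  · have hmono := monotoneOn_mul_exp_of_neg_mul_le_deriv hs hs' hg
      (fun z hz => (abs_le.1 (h z hz)).1) hy hx hyx
    calc g y = g y * Real.exp (K * y) * Real.exp (-K * y) := by
          rw [mul_assoc, ← Real.exp_add]; simp
      _ ≤ g x * Real.exp (K * x) * Real.exp (-K * y) := by gcongr
      _ = g x * Real.exp (K * |y - x|) := by
          rw [abs_sub_comm, abs_of_nonneg (sub_nonneg.2 hyx), mul_assoc, ← Real.exp_add]; ring_nf

end Gronwall

theorem setLIntegral_ofReal_mul_eq_top {α : Type*} [MeasurableSpace α] {μ : Measure α}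
    {s : Set α} {f g : α → ℝ} {δ : ℝ} (hs : MeasurableSet s) (hδ : 0 < δ)
    (hg : ∀ x ∈ s, δ ≤ g x) (hf : ∫⁻ x in s, ENNReal.ofReal (f x) ∂μ = ⊤) :
    ∫⁻ x in s, ENNReal.ofReal (g x * f x) ∂μ = ⊤ := by
  refine top_unique ?_
  calc ⊤ = ENNReal.ofReal δ * ∫⁻ x in s, ENNReal.ofReal (f x) ∂μ := by
        rw [hf, ENNReal.mul_top (by simpa using hδ)]
    _ = ∫⁻ x in s, ENNReal.ofReal δ * ENNReal.ofReal (f x) ∂μ :=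
        (lintegral_const_mul' _ _ ENNReal.ofReal_ne_top).symm
    _ ≤ ∫⁻ x in s, ENNReal.ofReal (g x * f x) ∂μ := setLIntegral_mono' hs fun x hx => by
        rw [ENNReal.ofReal_mul (hδ.le.trans (hg x hx))]
        gcongr
        exact hg x hx

theorem eqOn_zero_of_abs_deriv_le_of_setLIntegral_mul_lt_top {g g' f : ℝ → ℝ} {K a b : ℝ}
    (hK : 0 ≤ K) (hg₀ : ∀ x ∈ Ioo a b, 0 ≤ g x) (hg : ∀ x ∈ Ioo a b, HasDerivAt g (g' x) x)
    (h : ∀ x ∈ Ioo a b, |g' x| ≤ K * g x) (hf : ∫⁻ x in Ioo a b, ENNReal.ofReal (f x) = ⊤)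
    (hgf : ∫⁻ x in Ioo a b, ENNReal.ofReal (g x * f x) < ⊤) : EqOn g 0 (Ioo a b) := by
  intro y hy
  by_contra hne
  have hpos : 0 < g y := (hg₀ y hy).lt_of_ne' hne
  have hlower : ∀ x ∈ Ioo a b, g y * Real.exp (-(K * (b - a))) ≤ g x := fun x hx => by
    have hdist : |y - x| ≤ b - a :=
      abs_sub_le_iff.2 ⟨by linarith [hx.1, hy.2], by linarith [hx.2, hy.1]⟩
    calc g y * Real.exp (-(K * (b - a)))
        ≤ g x * Real.exp (K * |y - x|) * Real.exp (-(K * (b - a))) := by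
          gcongr
          exact le_mul_exp_abs_sub_of_abs_deriv_le (convex_Ioo a b) isOpen_Ioo hg h hx hy
      _ ≤ g x * Real.exp (K * (b - a)) * Real.exp (-(K * (b - a))) := by
          gcongr
          exact hg₀ x hx
      _ = g x := by rw [mul_assoc, ← Real.exp_add]; simp
  exact hgf.ne (setLIntegral_ofReal_mul_eq_top measurableSet_Ioo
    (mul_pos hpos (Real.exp_pos _)) hlower hf)

theorem solution_tendsto_zero_general
    {H : Type*} [NormedAddCommGroup H] [InnerProductSpace ℂ H] [CompleteSpace H]
    (A c : H →L[ℂ] H)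
    (hc_skew : ContinuousLinearMap.adjoint c = -c)
    (l : ℝ) (ε : ℝ) (hε : 0 < ε)
    (f : ℝ → ℝ)
    (hf_div : ∫⁻ x in Set.Ioo 0 ε, ENNReal.ofReal (f x) = ⊤)
    (φ : ℝ → H)
    (hφ_ode : ∀ x ∈ Set.Ioo 0 ε,
      HasDerivAt φ (-(A (φ x)) - ((l * f x : ℝ) : ℂ) • c (φ x)) x)
    (hφ_L2 : ∫⁻ x in Set.Ioo 0 ε, ENNReal.ofReal (‖φ x‖ ^ 2 * f x) < ⊤) :
    Filter.Tendsto φ (nhdsWithin 0 (Set.Ioi 0)) (nhds 0) := by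
  have hderiv : ∀ x ∈ Ioo 0 ε,
      HasDerivAt (‖φ ·‖ ^ 2) (-2 * RCLike.re (inner ℂ (φ x) (A (φ x)))) x :=
    fun x hx => hasDerivAt_norm_sq_of_adjoint_eq_neg hc_skew (hφ_ode x hx)
  have hbound : ∀ x ∈ Ioo 0 ε,
      |-2 * RCLike.re (inner ℂ (φ x) (A (φ x)))| ≤ 2 * ‖A‖ * ‖φ x‖ ^ 2 := fun x _ => by
    rw [abs_mul, abs_neg, abs_two, mul_assoc]
    gcongr
    exact abs_re_inner_self_apply_le A (φ x)
  have hvanish := eqOn_zero_of_abs_deriv_le_of_setLIntegral_mul_lt_top (by positivity)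
    (fun x _ => by positivity) hderiv hbound hf_div hφ_L2
  have hφ_zero : φ =ᶠ[nhdsWithin 0 (Ioi 0)] 0 :=
    eventuallyEq_of_mem (Ioo_mem_nhdsGT hε) fun x hx => by simpa using hvanish hx
  exact tendsto_const_nhds.congr' hφ_zero.symm

/-- Under the hypotheses of the main abstract lemma (bounded self-adjoint `A`,
skew-adjoint involution `c` anti-commuting with `A`, real `l`, `f : (0,ε) → (0,∞)`
continuous with divergent integral), any solution `φ` of `φ' + Aφ = -l f c φ` which is
square-integrable with respect to `f dx` tends to `0` in `H` as `x → 0⁺`. -/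
theorem solution_tendsto_zero
    {H : Type*} [NormedAddCommGroup H] [InnerProductSpace ℂ H] [CompleteSpace H]
    (A c : H →L[ℂ] H) (hA : IsSelfAdjoint A)
    (hc_skew : ContinuousLinearMap.adjoint c = -c)
    (hc_sq : c ∘L c = -ContinuousLinearMap.id ℂ H)
    (hAc : A ∘L c = -(c ∘L A))
    (l : ℝ) (ε : ℝ) (hε : 0 < ε)
    (f : ℝ → ℝ) (hf_cont : ContinuousOn f (Set.Ioo 0 ε))
    (hf_pos : ∀ x ∈ Set.Ioo 0 ε, 0 < f x)
    (hf_div : ∫⁻ x in Set.Ioo 0 ε, ENNReal.ofReal (f x) = ⊤)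
    (φ : ℝ → H)
    (hφ_ode : ∀ x ∈ Set.Ioo 0 ε,
      HasDerivAt φ (-(A (φ x)) - ((l * f x : ℝ) : ℂ) • c (φ x)) x)
    (hφ_deriv_cont : ContinuousOn (deriv φ) (Set.Ioo 0 ε))
    (hφ_L2 : ∫⁻ x in Set.Ioo 0 ε, ENNReal.ofReal (‖φ x‖ ^ 2 * f x) < ⊤) :
    Filter.Tendsto φ (nhdsWithin 0 (Set.Ioi 0)) (nhds 0) :=
  solution_tendsto_zero_general A c hc_skew l ε hε f hf_div φ hφ_ode hφ_L2
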